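/- arXiv:1709.08734 — 3 statements merged into one kernel-verified Lean document; each statement's English description precedes it below -/
import Mathlib

section
/- Let α be an infinite cardinal with α ≥ 2^{ℵ₀}, B a set with #B > α endowed with the topology whose proper closed sets are exactly the subsets of cardinality ≤ α, and A the same set with the discrete topology. Then the identity map id : A → B is a weak homotopy equivalence. -/
open ContinuousMap Topology

noncomputable section

/-- The setoid of homotopy on continuous maps `C(A, X)`. -/
def homotopySetoid (A X : Type*) [TopologicalSpace A] [TopologicalSpace X] :
    Setoid C(A, X) :=
  ⟨ContinuousMap.Homotopic, ContinuousMap.Homotopic.equivalence⟩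

/-- `[A, X]`: homotopy classes of continuous maps `A → X`. -/
def HtpyClasses (A X : Type*) [TopologicalSpace A] [TopologicalSpace X] : Type _ :=
  Quotient (homotopySetoid A X)

/-- Precomposition `f^* : [B, X] → [A, X]`, `[g] ↦ [g ∘ f]`. -/
def precomp {A B X : Type*} [TopologicalSpace A] [TopologicalSpace B] [TopologicalSpace X]
    (f : C(A, B)) : HtpyClasses B X → HtpyClasses A X :=
  Quotient.map (fun g => g.comp f)
    (fun _ _ h => ContinuousMap.Homotopic.comp h (ContinuousMap.Homotopic.refl f))

/-- The induced map on path components. -/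
def zerothMap {A B : Type*} [TopologicalSpace A] [TopologicalSpace B] (f : C(A, B)) :
    ZerothHomotopy A → ZerothHomotopy B :=
  Quotient.map f (fun _ _ h => Nonempty.map (fun p => p.map f.continuous) h)

/-- The induced map on `n`-th homotopy groups. -/
def piMap {A B : Type*} [TopologicalSpace A] [TopologicalSpace B] (f : C(A, B)) (n : ℕ)
    (a : A) : HomotopyGroup (Fin n) A a → HomotopyGroup (Fin n) B (f a) :=
  Quotient.map
    (fun p => ⟨f.comp p.1, fun y hy => by rw [ContinuousMap.comp_apply, p.2 y hy]⟩)
    (fun _ _ h => Nonempty.map (fun H => H.compContinuousMap f) h)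

/-- A continuous map is a weak homotopy equivalence if it induces a bijection on path
components and isomorphisms on all homotopy groups at all basepoints. -/
def IsWeakHomotopyEquiv {A B : Type*} [TopologicalSpace A] [TopologicalSpace B]
    (f : C(A, B)) : Prop :=
  Function.Bijective (zerothMap f) ∧ ∀ (n : ℕ) (a : A), Function.Bijective (piMap f n a)

/-- `X` inverts weak homotopy equivalences: every weak homotopy equivalence `f : A → B`
induces a bijection `f^* : [B, X] → [A, X]`. -/
def InvertsWeakEquivs (X : Type) [TopologicalSpace X] : Prop :=
  ∀ (A B : Type) [TopologicalSpace A] [TopologicalSpace B] (f : C(A, B)),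
    IsWeakHomotopyEquiv f → Function.Bijective (precomp (X := X) f)

/-! Since `α ≥ 𝔠`, every set of cardinality at most `𝔠` is closed in `B`. A space with this
property receives only constant maps from preconnected spaces of cardinality at most `𝔠`:
the range of such a map is a discrete subspace. Cubes `I^n` and `I × I^n` have cardinality
`𝔠`, so every path, every generalized loop and every homotopy between such loops in `B` is
constant, and a continuous bijection into `B` is therefore a weak homotopy equivalence. -/

open Cardinal unitInterval Set Function

universe u

theorem PreconnectedSpace.constant_of_forall_mk_le_isClosed {X Y : Type u} [TopologicalSpace X]
    [TopologicalSpace Y] [PreconnectedSpace Y] {κ : Cardinal.{u}}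
    (hX : ∀ s : Set X, #s ≤ κ → IsClosed s) (hY : #Y ≤ κ) {f : Y → X} (hf : Continuous f)
    (y y' : Y) : f y = f y' := by
  have : DiscreteTopology (range f) := discreteTopology_iff_forall_isClosed.mpr fun s ↦ by
    have hs : #(Subtype.val '' s) ≤ κ :=
      mk_image_le.trans <| (mk_set_le s).trans <| mk_range_le.trans hY
    rw [← preimage_image_eq s Subtype.val_injective]
    exact (hX _ hs).preimage continuous_subtype_val
  exact congrArg Subtype.val <|
    PreconnectedSpace.constant ‹_› (f := rangeFactorization f) (hf.subtype_mk _)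

theorem Cardinal.mk_unitInterval : #I = 𝔠 :=
  mk_Icc_real zero_lt_one

theorem Cardinal.mk_pi_unitInterval_le (ι : Type) [Countable ι] : #(ι → I) ≤ 𝔠 := by
  rw [mk_arrow, mk_unitInterval, lift_id, lift_id]
  calc 𝔠 ^ #ι ≤ 𝔠 ^ ℵ₀ := power_le_power_left continuum_ne_zero mk_le_aleph0
    _ = 𝔠 := continuum_power_aleph0

theorem Cardinal.mk_unitInterval_prod_pi_le (ι : Type) [Countable ι] : #(I × (ι → I)) ≤ 𝔠 := by
  rw [← mk_congr (Equiv.piOptionEquivProd (β := fun _ : Option ι ↦ I))]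
  exact mk_pi_unitInterval_le _

section SmallSetsClosed

variable {A B : Type} [TopologicalSpace A] [TopologicalSpace B]

theorem zerothMap_surjective {f : C(A, B)} (hf : Surjective f) : Surjective (zerothMap f) :=
  Quotient.ind fun y ↦ let ⟨x, hx⟩ := hf y; ⟨⟦x⟧, congrArg _ hx⟩

theorem eq_of_joined_of_forall_mk_le_isClosed (hB : ∀ s : Set B, #s ≤ 𝔠 → IsClosed s)
    {x y : B} (h : Joined x y) : x = y := by
  obtain ⟨p⟩ := h
  simpa using PreconnectedSpace.constant_of_forall_mk_le_isClosed hB mk_unitInterval.le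
    p.continuous 0 1

theorem zerothMap_injective (hB : ∀ s : Set B, #s ≤ 𝔠 → IsClosed s)
    {f : C(A, B)} (hf : Injective f) : Injective (zerothMap f) := by
  intro x y
  induction x, y using Quotient.inductionOn₂ with
  | h x y => exact fun h ↦ congrArg _ (hf (eq_of_joined_of_forall_mk_le_isClosed hB
      (Quotient.exact h : Joined (f x) (f y))))

theorem piMap_injective (hB : ∀ s : Set B, #s ≤ 𝔠 → IsClosed s)
    {f : C(A, B)} (hf : Injective f) (n : ℕ) (a : A) :
    Injective (piMap f n a) := by
  intro p q
  induction p, q using Quotient.inductionOn₂ with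
  | h p q =>
    intro h
    obtain ⟨H⟩ := Quotient.exact h
    refine congrArg _ (GenLoop.ext _ _ fun z ↦ hf ?_)
    simpa using PreconnectedSpace.constant_of_forall_mk_le_isClosed hB
      (mk_unitInterval_prod_pi_le (Fin n)) H.continuous (0, z) (1, z)

theorem piMap_surjective (hB : ∀ s : Set B, #s ≤ 𝔠 → IsClosed s)
    {f : C(A, B)} (hf : Bijective f) (n : ℕ) (a : A) :
    Surjective (piMap f n a) := by
  refine Quotient.ind fun q ↦ ?_
  have hq (z z' : Fin n → I) : q z = q z' :=
    PreconnectedSpace.constant_of_forall_mk_le_isClosed hB (mk_pi_unitInterval_le (Fin n))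
      q.1.continuous z z'
  obtain ⟨b, hb⟩ := hf.2 (q 0)
  have hba (z) (hz : z ∈ Cube.boundary (Fin n)) : b = a :=
    hf.1 (hb.trans ((hq 0 z).trans (q.2 z hz)))
  exact ⟨⟦⟨ContinuousMap.const _ b, hba⟩⟧,
    congrArg _ (GenLoop.ext _ _ fun z ↦ hb.trans (hq 0 z))⟩

theorem isWeakHomotopyEquiv_of_bijective (hB : ∀ s : Set B, #s ≤ 𝔠 → IsClosed s)
    {f : C(A, B)} (hf : Bijective f) :
    IsWeakHomotopyEquiv f :=
  ⟨⟨zerothMap_injective hB hf.1, zerothMap_surjective hf.2⟩,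
    fun n a ↦ ⟨piMap_injective hB hf.1 n a, piMap_surjective hB hf n a⟩⟩

end SmallSetsClosed

theorem stmt8_general (B : Type) (α : Cardinal)
    (hc : Cardinal.continuum ≤ α)
    (t : TopologicalSpace B)
    (ht : ∀ F : Set B, IsClosed[t] F ↔ F = Set.univ ∨ Cardinal.mk F ≤ α) :
    @IsWeakHomotopyEquiv B B ⊥ t (@ContinuousMap.mk B B ⊥ t id continuous_bot) :=
  @isWeakHomotopyEquiv_of_bijective B B ⊥ t (fun s hs ↦ (ht s).mpr (.inr (hs.trans hc))) _
    bijective_id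

/-- If `α ≥ 𝔠` is infinite, `#B > α`, `B` carries the topology whose proper closed sets are
the subsets of cardinality `≤ α`, and `A` is the same set with the discrete topology, then
the identity `A → B` is a weak homotopy equivalence. -/
theorem stmt8 (B : Type) (α : Cardinal) (hα : Cardinal.aleph0 ≤ α)
    (hc : Cardinal.continuum ≤ α) (hB : α < Cardinal.mk B)
    (t : TopologicalSpace B)
    (ht : ∀ F : Set B, IsClosed[t] F ↔ F = Set.univ ∨ Cardinal.mk F ≤ α) :
    @IsWeakHomotopyEquiv B B ⊥ t (@ContinuousMap.mk B B ⊥ t id continuous_bot) :=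
  stmt8_general B α hc t ht
end
end

section
/- Let X be a topological space, α = max(#X, 2^{ℵ₀}), and B a set with #B > α endowed with the topology whose proper closed sets are the subsets of cardinality ≤ α. Let h : B → X be continuous. Then there exists x ∈ X such that x belongs to every open neighborhood of h(b) for every b ∈ B; in particular, h(b) lies in the same path component as x for all b. -/
open ContinuousMap Topology

noncomputable section

/- Since `#X ≤ α < #B` and `α⁺` is regular, some fiber `h⁻¹{x}` has more than `α`
points. Every subset of `B` of cardinality `> α` is dense, so `h b ∈ h (closure h⁻¹{x}) ⊆
closure {x}` for every `b`, i.e. `x ⤳ h b`; a specialization is joined by the path that stays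
at `x` before time `1`. -/

universe u

open Cardinal in
theorem Cardinal.exists_lt_mk_fiber_of_le_of_lt {X B : Type u} (f : B → X) {α : Cardinal}
    (hα : ℵ₀ ≤ α) (hX : #X ≤ α) (hB : α < #B) : ∃ x : X, α < #(f ⁻¹' {x}) := by
  simp_rw [← Order.succ_le_iff]
  exact infinite_pigeonhole_card f (Order.succ α) (Order.succ_le_of_lt hB)
    (hα.trans (Order.le_succ α))
    ((hX.trans_lt (Order.lt_succ α)).trans_le (isRegular_succ hα).cof_ord.ge)

theorem dense_of_lt_mk {B : Type*} [TopologicalSpace B] {α : Cardinal}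
    (hclosed : ∀ F : Set B, IsClosed F → F = Set.univ ∨ Cardinal.mk F ≤ α) {S : Set B}
    (hS : α < Cardinal.mk S) : Dense S := by
  rcases hclosed _ isClosed_closure with hdense | hsmall
  · exact dense_iff_closure_eq.mpr hdense
  · exact absurd ((Cardinal.mk_le_mk_of_subset subset_closure).trans hsmall) hS.not_ge

theorem specializes_of_dense_fiber {B X : Type*} [TopologicalSpace B] [TopologicalSpace X]
    {f : B → X} (hf : Continuous f) {x : X} (hfiber : Dense (f ⁻¹' {x})) (b : B) :
    x ⤳ f b :=
  specializes_iff_mem_closure.mpr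
    (map_mem_closure hf (hfiber.closure_eq ▸ Set.mem_univ b) fun _ hy => hy)

theorem Specializes.joined {X : Type*} [TopologicalSpace X] {x y : X} (h : x ⤳ y) :
    Joined x y :=
  joinedIn_univ.mp (h.joinedIn (Set.mem_univ x) (Set.mem_univ y))

/-- Let `α = max (#X) 𝔠`, let `B` have cardinality `> α` with the topology whose proper
closed sets are the subsets of cardinality `≤ α`, and let `h : B → X` be continuous. Then
there is `x ∈ X` belonging to every open neighbourhood of every `h b`; in particular each
`h b` lies in the same path component as `x`. -/
theorem stmt9 (X B : Type) [TopologicalSpace X] (α : Cardinal)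
    (hα : α = max (Cardinal.mk X) Cardinal.continuum) (hB : α < Cardinal.mk B)
    (t : TopologicalSpace B)
    (ht : ∀ F : Set B, IsClosed[t] F ↔ F = Set.univ ∨ Cardinal.mk F ≤ α)
    (h : @ContinuousMap B X t _) :
    ∃ x : X, (∀ (b : B) (U : Set X), IsOpen U → h b ∈ U → x ∈ U) ∧
      ∀ b : B, Joined x (h b) := by
  let := t
  have hα_inf : Cardinal.aleph0 ≤ α :=
    hα ▸ Cardinal.aleph0_le_continuum.trans (le_max_right _ _)
  obtain ⟨x, hx⟩ := Cardinal.exists_lt_mk_fiber_of_le_of_lt h hα_inf (hα ▸ le_max_left _ _) hB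
  have hspec : ∀ b, x ⤳ h b :=
    specializes_of_dense_fiber h.continuous (dense_of_lt_mk (fun F => (ht F).mp) hx)
  exact ⟨x, fun b => specializes_iff_forall_open.mp (hspec b),
    fun b => (hspec b).joined⟩
end
end

section
/- Let (X, x₀) be a pointed space such that for every weak homotopy equivalence f : A → B between Hausdorff spaces and every a₀ ∈ A, the induced map f* : [(B, f(a₀)), (X, x₀)] → [(A, a₀), (X, x₀)] on pointed homotopy classes is a bijection. Then X is path-connected. -/
/-!
The inclusion `ℕ ⊕ {∗} → ℕ ∪ {∞}` of the discrete space onto the one-point compactification is a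
continuous bijection between totally disconnected Hausdorff spaces, hence a weak homotopy
equivalence. Given `x : X`, surjectivity of the induced map on `[-, (X, x₀)]` extends `n ↦ x`,
`∗ ↦ x₀` up to pointed homotopy to some `g : (ℕ ∪ {∞}, ∞) → (X, x₀)`, so every `g n` is joined to
`x`. Hence `g` and `g ∘ succ` are pointed homotopic after restriction to `ℕ ⊕ {∗}`, and injectivity
gives a homotopy `G : g ≃ g ∘ succ` rel `∞`. Its tracks `t ↦ G (t, n)` are paths from `g n` to
`g (n + 1)` which, by continuity of `G` at `I × {∞}`, converge uniformly to the constant path at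
`x₀`; their infinite concatenation is a path from `g 0` to `x₀`.
-/

open ContinuousMap Topology

noncomputable section

/-- Pointed continuous maps `(A, a₀) → (X, x₀)`. -/
def PtdMap (A X : Type*) [TopologicalSpace A] [TopologicalSpace X] (a₀ : A) (x₀ : X) :=
  {f : C(A, X) // f a₀ = x₀}

/-- The setoid of pointed homotopy (homotopy rel the basepoint). -/
def ptdHomotopySetoid (A X : Type*) [TopologicalSpace A] [TopologicalSpace X]
    (a₀ : A) (x₀ : X) : Setoid (PtdMap A X a₀ x₀) :=
  ⟨fun f g => f.1.HomotopicRel g.1 {a₀},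
   ⟨fun f => ContinuousMap.HomotopicRel.refl f.1,
    fun h => h.symm, fun h h' => h.trans h'⟩⟩

/-- `[(A, a₀), (X, x₀)]`: pointed homotopy classes of pointed maps. -/
def PtdHtpyClasses (A X : Type*) [TopologicalSpace A] [TopologicalSpace X]
    (a₀ : A) (x₀ : X) : Type _ :=
  Quotient (ptdHomotopySetoid A X a₀ x₀)

/-- Precomposition `f^* : [(B, f a₀), (X, x₀)] → [(A, a₀), (X, x₀)]`. -/
def ptdPrecomp {A B X : Type*} [TopologicalSpace A] [TopologicalSpace B] [TopologicalSpace X]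
    (f : C(A, B)) (a₀ : A) (x₀ : X) :
    PtdHtpyClasses B X (f a₀) x₀ → PtdHtpyClasses A X a₀ x₀ :=
  Quotient.map (fun g => ⟨g.1.comp f, by simp [g.2]⟩)
    (fun g₀ g₁ h => h.map (fun H =>
      { toHomotopy := H.toHomotopy.compContinuousMap f
        prop' := fun t a ha => by
          rw [Set.mem_singleton_iff] at ha
          subst ha
          exact H.eq_fst t rfl }))

open Filter Set unitInterval

section InfiniteConcatenation

open scoped ENNReal

variable {X : Type*} [TopologicalSpace X]

theorem ENNReal.joined_zero_top : Joined (0 : ℝ≥0∞) ∞ := by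
  let e := ENNReal.orderIsoUnitIntervalBirational
  refine ⟨⟨⟨e.symm, e.symm.toHomeomorph.continuous⟩, ?_, ?_⟩⟩ <;>
  · show e.symm _ = _
    rw [OrderIso.symm_apply_eq]
    ext
    simp [e]

theorem joined_of_tendsto_atTop {R : ℝ → X} (hR : Continuous R) {x : X}
    (h : Tendsto R atTop (𝓝 x)) : Joined (R 0) x := by
  let F : ℝ≥0∞ → X := fun a => if a = ∞ then x else R a.toReal
  have hF : Continuous F := by
    refine continuous_iff_continuousAt.2 fun a => ?_
    induction a using ENNReal.recTopCoe with
    | top =>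
      refine ENNReal.nhds_top_basis.tendsto_left_iff.2 fun U hU => ?_
      obtain ⟨N, hN⟩ := (eventually_ge_atTop 0).and (h hU) |>.exists_forall_of_atTop
      refine ⟨ENNReal.ofReal N, ENNReal.ofReal_lt_top, fun b hb => ?_⟩
      induction b using ENNReal.recTopCoe with
      | top => simpa [F] using mem_of_mem_nhds hU
      | coe r =>
        have hNr : N ≤ r := by
          simpa using ((ENNReal.ofReal_lt_iff_lt_toReal (hN N le_rfl).1 ENNReal.coe_ne_top).1 hb).le
        simpa [F] using (hN r hNr).2
    | coe r =>
      rw [ContinuousAt, ENNReal.nhds_coe, tendsto_map'_iff]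
      simpa [F, Function.comp_def] using (hR.comp NNReal.continuous_coe).tendsto r
  simpa [F] using ENNReal.joined_zero_top.map hF

theorem tendsto_apply_of_tendsto_const {K α : Type*} [TopologicalSpace K] [CompactSpace K]
    {l : Filter α} {γ : α → C(K, X)} {x : X} (h : Tendsto γ l (𝓝 (const K x))) (u : α → K) :
    Tendsto (fun i => γ i (u i)) l (𝓝 x) := by
  refine (nhds_basis_opens x).tendsto_right_iff.2 fun U ⟨hxU, hU⟩ => ?_
  filter_upwards [h (eventually_mapsTo isCompact_univ hU fun _ _ => hxU)] with i hi
  exact hi (mem_univ _)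

def seqConcat (γ : ℕ → C(I, X)) (s : ℝ) : X :=
  Set.IccExtend zero_le_one (γ ⌊s⌋₊) (s - ⌊s⌋₊)

variable {γ : ℕ → C(I, X)}

theorem seqConcat_of_nonpos {s : ℝ} (hs : s ≤ 0) : seqConcat γ s = γ 0 0 := by
  rw [seqConcat, Nat.floor_eq_zero.2 (by linarith), Nat.cast_zero, sub_zero,
    IccExtend_of_le_left _ _ hs]
  rfl

theorem seqConcat_eqOn (hγ : ∀ n, γ n 1 = γ (n + 1) 0) (n : ℕ) :
    EqOn (seqConcat γ) (fun s => Set.IccExtend zero_le_one (γ n) (s - n)) (Icc n (n + 1)) := by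
  intro s ⟨hns, hsn⟩
  rcases hsn.lt_or_eq with hsn | rfl
  · rw [seqConcat, (Nat.floor_eq_iff (n.cast_nonneg.trans hns)).2 ⟨hns, hsn⟩]
  · have : ⌊(n : ℝ) + 1⌋₊ = n + 1 := by exact_mod_cast Nat.floor_natCast (n + 1)
    rw [seqConcat, this, IccExtend_of_le_left _ _ (by simp)]
    simp only [add_sub_cancel_left, IccExtend_right]
    exact (hγ n).symm

theorem continuous_seqConcat (hγ : ∀ n, γ n 1 = γ (n + 1) 0) : Continuous (seqConcat γ) := by
  have hlf : LocallyFinite fun n : ℤ => Icc (n : ℝ) (n + 1) :=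
    locallyFinite_Icc_of_tendsto tendsto_intCast_atTop_atTop
      (tendsto_atBot_add_const_right _ _ (tendsto_intCast_atBot_iff.2 tendsto_id))
  refine hlf.continuous (iUnion_Icc_intCast ℝ) (fun _ => isClosed_Icc) fun n => ?_
  rcases le_or_gt 0 n with hn | hn
  · lift n to ℕ using hn
    exact ((γ n).continuous.Icc_extend'.comp (continuous_sub_right _)).continuousOn.congr
      (seqConcat_eqOn hγ n)
  · refine continuousOn_const.congr fun s hs => seqConcat_of_nonpos (hs.2.trans ?_)
    exact_mod_cast hn

theorem joined_of_tendsto_const (hγ : ∀ n, γ n 1 = γ (n + 1) 0) {x : X}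
    (h : Tendsto γ atTop (𝓝 (const I x))) : Joined (γ 0 0) x := by
  rw [← seqConcat_of_nonpos le_rfl]
  exact joined_of_tendsto_atTop (continuous_seqConcat hγ)
    (tendsto_apply_of_tendsto_const (h.comp tendsto_nat_floor_atTop)
      fun s => projIcc 0 1 zero_le_one (s - ⌊s⌋₊))

end InfiniteConcatenation

section TotallyDisconnected

variable {A B : Type*} [TopologicalSpace A] [TopologicalSpace B]

theorem Joined.eq_of_totallyDisconnected [TotallyDisconnectedSpace A] {a b : A}
    (h : Joined a b) : a = b := by
  obtain ⟨γ⟩ := h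
  simpa using TotallyDisconnectedSpace.eq_of_continuous γ γ.continuous 0 1

theorem ContinuousMap.HomotopicRel.eq_of_totallyDisconnected [TotallyDisconnectedSpace B]
    {u v : C(A, B)} {S : Set A} (h : u.HomotopicRel v S) : u = v := by
  obtain ⟨H⟩ := h
  ext a
  exact Joined.eq_of_totallyDisconnected ⟨H.evalAt a⟩

theorem ZerothHomotopy.mk_bijective [TotallyDisconnectedSpace A] :
    Function.Bijective (ZerothHomotopy.mk (X := A)) :=
  ⟨fun _ _ h => (Quotient.exact h).eq_of_totallyDisconnected, ZerothHomotopy.mk_surjective⟩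

variable {f : C(A, B)}

theorem zerothMap_bijective [TotallyDisconnectedSpace A] [TotallyDisconnectedSpace B]
    (hf : Function.Bijective f) : Function.Bijective (zerothMap f) := by
  rw [← Function.Bijective.of_comp_iff _ ZerothHomotopy.mk_bijective]
  exact ZerothHomotopy.mk_bijective.comp hf

theorem piMap_bijective [TotallyDisconnectedSpace B] (hf : Function.Bijective f) (n : ℕ) (a : A) :
    Function.Bijective (piMap f n a) := by
  constructor
  · rintro ⟨p⟩ ⟨q⟩ h
    have hpq : f.comp p.1 = f.comp q.1 :=
      HomotopicRel.eq_of_totallyDisconnected (Quotient.exact h)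
    exact congrArg _ (Subtype.ext (ext fun z => hf.1 (DFunLike.congr_fun hpq z)))
  · rintro ⟨q⟩
    have hq (z) : q.1 z = q.1 0 := TotallyDisconnectedSpace.eq_of_continuous _ q.1.continuous _ _
    obtain ⟨a', ha'⟩ := hf.2 (q.1 0)
    refine ⟨Quotient.mk _ ⟨const _ a', fun y hy => hf.1 ?_⟩, congrArg _ (Subtype.ext ?_)⟩
    · rw [const_apply, ha', ← hq y, q.2 y hy]
    · ext z
      simp [ha', hq z]

theorem isWeakHomotopyEquiv_of_bijective_s12 [TotallyDisconnectedSpace A] [TotallyDisconnectedSpace B]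
    (hf : Function.Bijective f) : IsWeakHomotopyEquiv f :=
  ⟨zerothMap_bijective hf, piMap_bijective hf⟩

end TotallyDisconnected

theorem ContinuousMap.homotopicRel_of_joined {A X : Type*} [TopologicalSpace A]
    [DiscreteTopology A] [TopologicalSpace X] {u v : C(A, X)} {S : Set A}
    (hS : ∀ a ∈ S, u a = v a) (h : ∀ a, Joined (u a) (v a)) : u.HomotopicRel v S := by
  classical
  refine ⟨{ toFun := fun p => if p.2 ∈ S then u p.2 else (h p.2).somePath p.1
            continuous_toFun := continuous_prod_of_discrete_right.2 fun a => ?_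
            map_zero_left := fun a => ?_
            map_one_left := fun a => ?_
            prop' := fun t a ha => ?_ }⟩
  · by_cases ha : a ∈ S
    · simpa [ha] using continuous_const
    · simpa [ha] using ((h a).somePath).continuous
  · by_cases ha : a ∈ S <;> simp [ha]
  · by_cases ha : a ∈ S <;> simp [ha, hS]
  · simp [ha]

namespace OnePoint

theorem tendsto_natCast_atTop_infty : Tendsto ((↑) : ℕ → OnePoint ℕ) atTop (𝓝 ∞) := by
  simpa [coclosedCompact_eq_cocompact, Nat.cofinite_eq_atTop] using tendsto_coe_infty (X := ℕ)

def succ : C(OnePoint ℕ, OnePoint ℕ) :=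
  continuousMapMkDiscrete (fun n => ((n + 1 : ℕ) : OnePoint ℕ)) ∞ <| by
    rw [Nat.cofinite_eq_atTop]
    exact tendsto_natCast_atTop_infty.comp (tendsto_add_atTop_nat 1)

def ofSumUnit : C(ℕ ⊕ Unit, OnePoint ℕ) :=
  ⟨Sum.elim (↑) fun _ => ∞, continuous_of_discreteTopology⟩

theorem ofSumUnit_bijective : Function.Bijective ofSumUnit := by
  refine ⟨?_, ?_⟩
  · rintro (m | ⟨⟩) (n | ⟨⟩) h <;> simp_all [ofSumUnit]
  · rintro (_ | n)
    exacts [⟨Sum.inr (), rfl⟩, ⟨Sum.inl n, rfl⟩]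

end OnePoint

open OnePoint

theorem joined_of_homotopyRel_succ {X : Type*} [TopologicalSpace X] {g : C(OnePoint ℕ, X)}
    (G : g.HomotopyRel (g.comp succ) {∞}) : Joined (g (0 : ℕ)) (g ∞) := by
  let γ : C(OnePoint ℕ, C(I, X)) := (G.toContinuousMap.comp .prodSwap).curry
  have hγ_infty : γ ∞ = const I (g ∞) := by
    ext t
    exact G.eq_fst t rfl
  have hstep (n : ℕ) : γ n 1 = γ (n + 1 : ℕ) 0 := (G.apply_one n).trans (G.apply_zero _).symm
  have hlim : Tendsto (fun n : ℕ => γ n) atTop (𝓝 (const I (g ∞))) :=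
    hγ_infty ▸ γ.continuous.continuousAt.tendsto.comp tendsto_natCast_atTop_infty
  simpa [γ] using joined_of_tendsto_const hstep hlim

theorem joined_of_bijective_ptdPrecomp_ofSumUnit {X : Type*} [TopologicalSpace X] {x₀ : X}
    (hbij : Function.Bijective (ptdPrecomp ofSumUnit (Sum.inr ()) x₀)) (x : X) :
    Joined x x₀ := by
  let h : PtdMap (ℕ ⊕ Unit) X (Sum.inr ()) x₀ :=
    ⟨⟨Sum.elim (fun _ => x) fun _ => x₀, continuous_of_discreteTopology⟩, rfl⟩
  obtain ⟨⟨g⟩, hg⟩ := hbij.2 (Quotient.mk _ h)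
  obtain ⟨K⟩ : (g.1.comp ofSumUnit).HomotopicRel h.1 {Sum.inr ()} := Quotient.exact hg
  have hgx (n : ℕ) : Joined (g.1 n) x := ⟨K.evalAt (Sum.inl n)⟩
  let g' : PtdMap (OnePoint ℕ) X ∞ x₀ := ⟨g.1.comp succ, g.2⟩
  have hgg' : ptdPrecomp ofSumUnit (Sum.inr ()) x₀ (Quotient.mk _ g) =
      ptdPrecomp ofSumUnit (Sum.inr ()) x₀ (Quotient.mk _ g') := by
    refine Quotient.sound (homotopicRel_of_joined ?_ ?_)
    · rintro _ rfl
      rfl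
    · rintro (n | ⟨⟩)
      exacts [(hgx n).trans (hgx (n + 1)).symm, Joined.refl _]
  obtain ⟨G⟩ : g.1.HomotopicRel g'.1 {∞} := Quotient.exact (hbij.1 hgg')
  rw [← g.2]
  exact (hgx 0).symm.trans (joined_of_homotopyRel_succ G)

/-- If `(X, x₀)` is a pointed space such that every weak homotopy equivalence between
Hausdorff spaces induces a bijection on pointed homotopy classes of maps into `(X, x₀)`,
then `X` is path-connected. -/
theorem stmt12 (X : Type) [TopologicalSpace X] (x₀ : X)
    (H : ∀ (A B : Type) [TopologicalSpace A] [TopologicalSpace B] [T2Space A] [T2Space B]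
      (f : C(A, B)), IsWeakHomotopyEquiv f → ∀ a₀ : A,
        Function.Bijective (ptdPrecomp (X := X) f a₀ x₀)) :
    PathConnectedSpace X := by
  have hbij :=
    H _ _ ofSumUnit (isWeakHomotopyEquiv_of_bijective_s12 ofSumUnit_bijective) (Sum.inr ())
  have hx₀ := joined_of_bijective_ptdPrecomp_ofSumUnit hbij
  exact ⟨⟨x₀⟩, fun x y => (hx₀ x).trans (hx₀ y).symm⟩
end
end
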